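/- arXiv:2207.07890 — 5 statements merged into one kernel-verified Lean document; each statement's English description precedes it below -/
import Mathlib

section
/- Let i range over a finite index set, and let Z_i, e_i, W_i ∈ ℝ. (a) If ∑_i (Z_i − e_i) W_i = 0, then ∑_i W_i Z_i (1 − e_i) = ∑_i W_i (1 − Z_i) e_i. (b) If ∑_i (Z_i − e_i) = 0, then ∑_i Z_i (1 − e_i) = ∑_i (1 − Z_i) e_i. (c) Consequently, if both ∑_i (Z_i − e_i) = 0 and ∑_i (Z_i − e_i) W_i = 0 hold and ∑_i Z_i(1 − e_i) ≠ 0, then the overlap-weighted means are exactly balanced: [∑_i W_i Z_i (1−e_i)] / [∑_i Z_i (1−e_i)] = [∑_i W_i (1−Z_i) e_i] / [∑_i (1−Z_i) e_i]. -/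
open Finset

/-! Termwise `W Z (1 - e) - W (1 - Z) e = (Z - e) W`, so the difference of the overlap-weighted
sums of the two arms is the moment `∑ (Z - e) W`; `W = 1` gives the total weights. -/

theorem overlap_weighted_sums_eq_of_sum_sub_mul_eq_zero {ι R : Type*} [CommRing R]
    (s : Finset ι) (Z e W : ι → R) (h : ∑ i ∈ s, (Z i - e i) * W i = 0) :
    ∑ i ∈ s, W i * Z i * (1 - e i) = ∑ i ∈ s, W i * (1 - Z i) * e i := by
  rw [← sub_eq_zero, ← sum_sub_distrib, ← h]
  exact sum_congr rfl fun i _ => by ring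

theorem overlap_total_weights_eq_of_sum_sub_eq_zero {ι R : Type*} [CommRing R]
    (s : Finset ι) (Z e : ι → R) (h : ∑ i ∈ s, (Z i - e i) = 0) :
    ∑ i ∈ s, Z i * (1 - e i) = ∑ i ∈ s, (1 - Z i) * e i := by
  simpa using overlap_weighted_sums_eq_of_sum_sub_mul_eq_zero s Z e 1 (by simpa using h)

/-- Algebraic identities behind the exact balance property of overlap weights:
(a) if `∑ (Z i − e i) * W i = 0` then the overlap-weighted sums of `W` in the
two arms agree; (b) if `∑ (Z i − e i) = 0` then the total overlap weights of the
two arms agree; (c) consequently the overlap-weighted means of `W` are exactly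
balanced whenever the denominators are nonzero. -/
theorem overlap_exact_balance_algebra
    {ι : Type*} (s : Finset ι) (Z e W : ι → ℝ) :
    ((∑ i ∈ s, (Z i - e i) * W i = 0) →
        ∑ i ∈ s, W i * Z i * (1 - e i) = ∑ i ∈ s, W i * (1 - Z i) * e i) ∧
    ((∑ i ∈ s, (Z i - e i) = 0) →
        ∑ i ∈ s, Z i * (1 - e i) = ∑ i ∈ s, (1 - Z i) * e i) ∧
    ((∑ i ∈ s, (Z i - e i) = 0) → (∑ i ∈ s, (Z i - e i) * W i = 0) →
      (∑ i ∈ s, Z i * (1 - e i) ≠ 0) →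
        (∑ i ∈ s, W i * Z i * (1 - e i)) / (∑ i ∈ s, Z i * (1 - e i)) =
          (∑ i ∈ s, W i * (1 - Z i) * e i) / (∑ i ∈ s, (1 - Z i) * e i)) := by
  refine ⟨overlap_weighted_sums_eq_of_sum_sub_mul_eq_zero s Z e W,
    overlap_total_weights_eq_of_sum_sub_eq_zero s Z e, fun hTotal hMoment _ => ?_⟩
  rw [overlap_weighted_sums_eq_of_sum_sub_mul_eq_zero s Z e W hMoment,
    overlap_total_weights_eq_of_sum_sub_eq_zero s Z e hTotal]
end

section
/- (Proposition 1.) Let there be n units with binary treatment indicators Z_i ∈ {0,1}, a single partially observed covariate with values X_i ∈ ℝ and missingness indicators R_i ∈ {0,1} (R_i = 1 if X_i is observed). Suppose the working treatment propensity scores are estimated from the logistic regression model with intercept and predictors X_iR_i and R_i, i.e., ê_i = 1/(1 + exp(−(θ̂_0 + θ̂_1 X_iR_i + θ̂_2 R_i))) where θ̂ = (θ̂_0, θ̂_1, θ̂_2) is a local maximum of the logistic log-likelihood ℓ(θ) = ∑_{i=1}^n [Z_i(θ_0 + θ_1 X_iR_i + θ_2 R_i) − log(1 + exp(θ_0 +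 θ_1 X_iR_i + θ_2 R_i))]. If ∑_i Z_i(1 − ê_i) ≠ 0 and ∑_i (1 − Z_i) ê_i ≠ 0, then the resulting overlap weights lead to exact balance in the means of each predictor W ∈ {XR, R} between the treatment and control groups: [∑_i W_i Z_i(1 − ê_i)] / [∑_i Z_i(1 − ê_i)] = [∑_i W_i (1 − Z_i) ê_i] / [∑_i (1 − Z_i) ê_i]. -/
/-!
At a local maximum of the logistic log-likelihood every directional derivative vanishes, which
gives the score equations `∑ᵢ xᵢⱼ (Zᵢ - êᵢ) = 0`, one per column of the design (here the intercept,
`XR` and `R`). Since `Z (1 - e) - (1 - Z) e = Z - e`, the intercept equation says that the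
overlap weights have the same total in both groups, and the equation for a predictor `W` says that
`∑ W Z (1 - e) = ∑ W (1 - Z) e`; dividing gives exact balance.
-/

open Finset Real Matrix

theorem Real.hasDerivAt_log_one_add_exp (s : ℝ) :
    HasDerivAt (fun s => log (1 + exp s)) (sigmoid s) s := by
  convert ((hasDerivAt_exp s).const_add 1).log (by positivity) using 1
  rw [sigmoid_def, exp_neg]
  field_simp
  ring

theorem hasDerivAt_bernoulliLogLik_comp_line (z a b : ℝ) :
    HasDerivAt (fun t => z * (a + t * b) - log (1 + exp (a + t * b))) (b * (z - sigmoid a)) 0 := by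
  have hline : HasDerivAt (fun t => a + t * b) b 0 := by
    simpa using ((hasDerivAt_id (0 : ℝ)).mul_const b).const_add a
  exact ((hline.const_mul z).sub
    ((hasDerivAt_log_one_add_exp a).comp_of_eq 0 hline (by simp))).congr_deriv (by ring)

noncomputable def logisticLogLik {ι κ : Type*} [Fintype ι] [Fintype κ]
    (Z : ι → ℝ) (x : ι → κ → ℝ) (θ : κ → ℝ) : ℝ :=
  ∑ i, (Z i * (θ ⬝ᵥ x i) - log (1 + exp (θ ⬝ᵥ x i)))

section LogisticScore

variable {ι κ : Type*} [Fintype ι] [Fintype κ] (Z : ι → ℝ) (x : ι → κ → ℝ) (θ : κ → ℝ)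

theorem hasLineDerivAt_logisticLogLik (v : κ → ℝ) :
    HasLineDerivAt ℝ (logisticLogLik Z x)
      (∑ i, (v ⬝ᵥ x i) * (Z i - sigmoid (θ ⬝ᵥ x i))) θ v := by
  unfold HasLineDerivAt logisticLogLik
  simp only [add_dotProduct, smul_dotProduct, smul_eq_mul]
  exact HasDerivAt.fun_sum fun i _ => hasDerivAt_bernoulliLogLik_comp_line _ _ _

theorem logisticLogLik_score_eq_zero [DecidableEq κ] (h : IsLocalMax (logisticLogLik Z x) θ)
    (j : κ) : ∑ i, x i j * (Z i - sigmoid (θ ⬝ᵥ x i)) = 0 := by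
  simpa [single_one_dotProduct] using
    h.hasLineDerivAt_eq_zero (hasLineDerivAt_logisticLogLik Z x θ (Pi.single j 1))

end LogisticScore

section OverlapWeights

variable {ι : Type*} [Fintype ι] (W Z e : ι → ℝ)

theorem sum_mul_overlap_treated_eq_control (hW : ∑ i, W i * (Z i - e i) = 0) :
    ∑ i, W i * Z i * (1 - e i) = ∑ i, W i * (1 - Z i) * e i := by
  rw [← sub_eq_zero, ← sum_sub_distrib, ← hW]
  exact sum_congr rfl fun i _ => by ring

theorem overlapWeighted_means_eq (h1 : ∑ i, (Z i - e i) = 0)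
    (hW : ∑ i, W i * (Z i - e i) = 0) :
    (∑ i, W i * Z i * (1 - e i)) / (∑ i, Z i * (1 - e i)) =
      (∑ i, W i * (1 - Z i) * e i) / (∑ i, (1 - Z i) * e i) := by
  have hden := sum_mul_overlap_treated_eq_control 1 Z e (by simpa using h1)
  simp only [Pi.one_apply, one_mul] at hden
  rw [sum_mul_overlap_treated_eq_control W Z e hW, hden]

end OverlapWeights

theorem overlap_weights_exact_balance_missing_indicator_general
    (n : ℕ) (Z X R : Fin n → ℝ)
    (ℓ : (Fin 3 → ℝ) → ℝ)
    (hℓ : ℓ = fun θ => ∑ i,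
        (Z i * (θ 0 + θ 1 * (X i * R i) + θ 2 * R i)
          - Real.log (1 + Real.exp (θ 0 + θ 1 * (X i * R i) + θ 2 * R i))))
    (θhat : Fin 3 → ℝ) (hmax : IsLocalMax ℓ θhat)
    (ehat : Fin n → ℝ)
    (hehat : ehat = fun i =>
        1 / (1 + Real.exp (-(θhat 0 + θhat 1 * (X i * R i) + θhat 2 * R i)))) :
    ((∑ i, (X i * R i) * Z i * (1 - ehat i)) / (∑ i, Z i * (1 - ehat i)) =
        (∑ i, (X i * R i) * (1 - Z i) * ehat i) / (∑ i, (1 - Z i) * ehat i)) ∧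
    ((∑ i, R i * Z i * (1 - ehat i)) / (∑ i, Z i * (1 - ehat i)) =
        (∑ i, R i * (1 - Z i) * ehat i) / (∑ i, (1 - Z i) * ehat i)) := by
  set x : Fin n → Fin 3 → ℝ := fun i => ![1, X i * R i, R i]
  have hℓx : ℓ = logisticLogLik Z x := by
    subst hℓ
    funext θ
    simp [x, logisticLogLik, dotProduct, Fin.sum_univ_three]
  have hex : ∀ i, ehat i = sigmoid (θhat ⬝ᵥ x i) := by
    subst hehat
    simp [x, sigmoid_def, dotProduct, Fin.sum_univ_three]
  have hscore := logisticLogLik_score_eq_zero Z x θhat (hℓx ▸ hmax)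
  simp only [← hex] at hscore
  have h0 : ∑ i, (Z i - ehat i) = 0 := by simpa [x] using hscore 0
  exact ⟨overlapWeighted_means_eq _ Z ehat h0 (by simpa [x] using hscore 1),
    overlapWeighted_means_eq _ Z ehat h0 (by simpa [x] using hscore 2)⟩

/-- Proposition 1: when the working treatment propensity scores are estimated by
logistic regression with intercept and predictors `X*R` and `R` (a local maximum
`θ̂` of the logistic log-likelihood), the resulting overlap weights exactly
balance the means of each predictor `W ∈ {X*R, R}` between the treatment and
control groups. -/
theorem overlap_weights_exact_balance_missing_indicator
    (n : ℕ) (Z X R : Fin n → ℝ)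
    (hZ : ∀ i, Z i = 0 ∨ Z i = 1) (hR : ∀ i, R i = 0 ∨ R i = 1)
    (ℓ : (Fin 3 → ℝ) → ℝ)
    (hℓ : ℓ = fun θ => ∑ i,
        (Z i * (θ 0 + θ 1 * (X i * R i) + θ 2 * R i)
          - Real.log (1 + Real.exp (θ 0 + θ 1 * (X i * R i) + θ 2 * R i))))
    (θhat : Fin 3 → ℝ) (hmax : IsLocalMax ℓ θhat)
    (ehat : Fin n → ℝ)
    (hehat : ehat = fun i =>
        1 / (1 + Real.exp (-(θhat 0 + θhat 1 * (X i * R i) + θhat 2 * R i))))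
    (hd1 : ∑ i, Z i * (1 - ehat i) ≠ 0)
    (hd0 : ∑ i, (1 - Z i) * ehat i ≠ 0) :
    ((∑ i, (X i * R i) * Z i * (1 - ehat i)) / (∑ i, Z i * (1 - ehat i)) =
        (∑ i, (X i * R i) * (1 - Z i) * ehat i) / (∑ i, (1 - Z i) * ehat i)) ∧
    ((∑ i, R i * Z i * (1 - ehat i)) / (∑ i, Z i * (1 - ehat i)) =
        (∑ i, R i * (1 - Z i) * ehat i) / (∑ i, (1 - Z i) * ehat i)) :=
  overlap_weights_exact_balance_missing_indicator_general n Z X R ℓ hℓ θhat hmax ehat hehat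
end

section
/- Let ι be a type and X, R : ι → ℝ functions, and let c ∈ ℝ be any constant. Define the constant-c imputed covariate X^c : ι → ℝ by X^c(i) = X(i)·R(i) + c·(1 − R(i)). Then the ℝ-linear span of the set of functions {1, R, X^c} (where 1 denotes the constant function one) in the space ι → ℝ equals the ℝ-linear span of {1, R, X·R}. In particular, regression adjustment using the design columns (1, R, X^c) spans the same column space as imputing the missing covariate values by zero. -/
namespace Submodule

variable {R M : Type*} [Ring R] [AddCommGroup M] [Module R M]

theorem span_insert_eq_span_insert_of_sub_mem {s : Set M} {x y : M} (h : x - y ∈ span R s) :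
    span R (insert x s) = span R (insert y s) := by
  have mem_of_sub_mem {x y : M} (h : x - y ∈ span R s) : x ∈ span R (insert y s) := by
    rw [← sub_add_cancel x y]
    exact add_mem (span_mono (Set.subset_insert y s) h) (subset_span (Set.mem_insert y s))
  rw [← span_insert_eq_span (mem_of_sub_mem h), Set.insert_comm,
    span_insert_eq_span (mem_of_sub_mem (neg_sub x y ▸ neg_mem h))]

theorem span_triple_eq_of_sub_mem_span_pair {u v x y : M} (h : x - y ∈ span R {u, v}) :
    span R {u, v, x} = span R {u, v, y} := by
  have insert_last (z : M) : ({u, v, z} : Set M) = insert z {u, v} := by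
    rw [Set.insert_comm, Set.pair_comm, Set.insert_comm, Set.pair_comm]
  rw [insert_last, insert_last]
  exact span_insert_eq_span_insert_of_sub_mem h

end Submodule

/-- Imputing a partially observed covariate `X` by any constant `c` yields a
design with the same column space as imputing by zero: the span of
`{1, R, X^c}` equals the span of `{1, R, X·R}`, where
`X^c i = X i * R i + c * (1 - R i)`. -/
theorem span_constant_imputation_eq_span_zero_imputation
    {ι : Type*} (X R : ι → ℝ) (c : ℝ)
    (Xc : ι → ℝ) (hXc : Xc = fun i => X i * R i + c * (1 - R i)) :
    Submodule.span ℝ ({(fun _ => 1), R, Xc} : Set (ι → ℝ)) =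
      Submodule.span ℝ ({(fun _ => 1), R, fun i => X i * R i} : Set (ι → ℝ)) := by
  refine Submodule.span_triple_eq_of_sub_mem_span_pair (Submodule.mem_span_pair.mpr ⟨c, -c, ?_⟩)
  -- `X^c - X·R = c • 1 - c • R`
  ext i
  simp only [hXc, Pi.add_apply, Pi.smul_apply, Pi.sub_apply, smul_eq_mul]
  ring
end

section
/- Let ι be a type, X, R, Z : ι → ℝ functions, and c ∈ ℝ a constant. Define the constant-c imputed covariate X^c : ι → ℝ by X^c(i) = X(i)·R(i) + c·(1 − R(i)). Then the ℝ-linear span of the set of functions {1, Z, X^c, R, Z·X^c, Z·R} in the space ι → ℝ equals the ℝ-linear span of {1, Z, X·R, R, Z·(X·R), Z·R}, where 1 denotes the constant function one and products of functions are pointwise. Hence the fully interacted ANCOVA design (treatment main effect, imputed covariate, missingness indicator, and all treatment interactions) has the same column space no matter which constant is used to impute the missing covariate values. -/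
/-- The fully interacted ANCOVA design with a constant-`c` imputed covariate
spans the same column space as the one with zero imputation: the span of
`{1, Z, X^c, R, Z·X^c, Z·R}` equals the span of `{1, Z, X·R, R, Z·(X·R), Z·R}`,
where `X^c i = X i * R i + c * (1 - R i)` and products are pointwise. -/
theorem span_ancova_constant_imputation_eq_span_zero_imputation
    {ι : Type*} (X R Z : ι → ℝ) (c : ℝ)
    (Xc : ι → ℝ) (hXc : Xc = fun i => X i * R i + c * (1 - R i)) :
    Submodule.span ℝ
        ({(fun _ => 1), Z, Xc, R,
          (fun i => Z i * Xc i), (fun i => Z i * R i)} : Set (ι → ℝ)) =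
      Submodule.span ℝ
        ({(fun _ => 1), Z, (fun i => X i * R i), R,
          (fun i => Z i * (X i * R i)), (fun i => Z i * R i)} : Set (ι → ℝ)) := by
  subst hXc
  set S : Set (ι → ℝ) := {(fun _ => 1), Z, (fun i => X i * R i + c * (1 - R i)), R,
      (fun i => Z i * (X i * R i + c * (1 - R i))), (fun i => Z i * R i)} with hS
  set T : Set (ι → ℝ) := {(fun _ => 1), Z, (fun i => X i * R i), R,
      (fun i => Z i * (X i * R i)), (fun i => Z i * R i)} with hT
  -- memberships of generators
  have hT1 : (fun _ => 1 : ι → ℝ) ∈ Submodule.span ℝ T :=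
    Submodule.subset_span (by simp [hT])
  have hTZ : Z ∈ Submodule.span ℝ T := Submodule.subset_span (by simp [hT])
  have hTXR : (fun i => X i * R i) ∈ Submodule.span ℝ T :=
    Submodule.subset_span (by simp [hT])
  have hTR : R ∈ Submodule.span ℝ T := Submodule.subset_span (by simp [hT])
  have hTZXR : (fun i => Z i * (X i * R i)) ∈ Submodule.span ℝ T :=
    Submodule.subset_span (by simp [hT])
  have hTZR : (fun i => Z i * R i) ∈ Submodule.span ℝ T :=
    Submodule.subset_span (by simp [hT])
  have hS1 : (fun _ => 1 : ι → ℝ) ∈ Submodule.span ℝ S :=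
    Submodule.subset_span (by simp [hS])
  have hSZ : Z ∈ Submodule.span ℝ S := Submodule.subset_span (by simp [hS])
  have hSXc : (fun i => X i * R i + c * (1 - R i)) ∈ Submodule.span ℝ S :=
    Submodule.subset_span (by simp [hS])
  have hSR : R ∈ Submodule.span ℝ S := Submodule.subset_span (by simp [hS])
  have hSZXc : (fun i => Z i * (X i * R i + c * (1 - R i))) ∈ Submodule.span ℝ S :=
    Submodule.subset_span (by simp [hS])
  have hSZR : (fun i => Z i * R i) ∈ Submodule.span ℝ S :=
    Submodule.subset_span (by simp [hS])
  -- Xc expressed in T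
  have hXcT : (fun i => X i * R i + c * (1 - R i)) ∈ Submodule.span ℝ T := by
    have : (fun i => X i * R i + c * (1 - R i))
        = (fun i => X i * R i) + c • ((fun _ => 1) : ι → ℝ) - c • R := by
      funext i; simp [Pi.add_apply, Pi.sub_apply, Pi.smul_apply]; ring
    rw [this]
    exact sub_mem (add_mem hTXR (Submodule.smul_mem _ _ hT1)) (Submodule.smul_mem _ _ hTR)
  have hZXcT : (fun i => Z i * (X i * R i + c * (1 - R i))) ∈ Submodule.span ℝ T := by
    have : (fun i => Z i * (X i * R i + c * (1 - R i)))
        = (fun i => Z i * (X i * R i)) + c • Z - c • (fun i => Z i * R i) := by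
      funext i; simp [Pi.add_apply, Pi.sub_apply, Pi.smul_apply]; ring
    rw [this]
    exact sub_mem (add_mem hTZXR (Submodule.smul_mem _ _ hTZ)) (Submodule.smul_mem _ _ hTZR)
  -- X·R expressed in S
  have hXRS : (fun i => X i * R i) ∈ Submodule.span ℝ S := by
    have : (fun i => X i * R i)
        = (fun i => X i * R i + c * (1 - R i)) - c • ((fun _ => 1) : ι → ℝ) + c • R := by
      funext i; simp [Pi.add_apply, Pi.sub_apply, Pi.smul_apply]; ring
    rw [this]
    exact add_mem (sub_mem hSXc (Submodule.smul_mem _ _ hS1)) (Submodule.smul_mem _ _ hSR)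
  have hZXRS : (fun i => Z i * (X i * R i)) ∈ Submodule.span ℝ S := by
    have : (fun i => Z i * (X i * R i))
        = (fun i => Z i * (X i * R i + c * (1 - R i))) - c • Z
          + c • (fun i => Z i * R i) := by
      funext i; simp [Pi.add_apply, Pi.sub_apply, Pi.smul_apply]; ring
    rw [this]
    exact add_mem (sub_mem hSZXc (Submodule.smul_mem _ _ hSZ)) (Submodule.smul_mem _ _ hSZR)
  apply le_antisymm
  · rw [Submodule.span_le]
    intro f hf
    simp only [hS, Set.mem_insert_iff, Set.mem_singleton_iff] at hf
    rcases hf with h | h | h | h | h | h <;> subst h <;>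
      first
        | exact hT1 | exact hTZ | exact hXcT | exact hTR | exact hZXcT | exact hTZR
  · rw [Submodule.span_le]
    intro f hf
    simp only [hT, Set.mem_insert_iff, Set.mem_singleton_iff] at hf
    rcases hf with h | h | h | h | h | h <;> subst h <;>
      first
        | exact hS1 | exact hSZ | exact hXRS | exact hSR | exact hZXRS | exact hSZR
end

section
/- Let (Ω, F, μ) be a probability space and m ⊆ F a sub-σ-algebra. Let Y0, Y1 : Ω → ℝ be bounded measurable, let Z : Ω → ℝ take values in {0,1}, be m-measurable, independent of the pair (Y0, Y1), with r := μ[Z] ∈ (0,1), and set Y = Z·Y1 + (1 − Z)·Y0. Let R : Ω → ℝ take values in {0,1}, let p be an m-measurable version of μ[R | m] with p ≥ ε almost everywhere for some ε > 0, and assume μ[R·Y | m] = μ[R | m]·μ[Y | m] almost everywhere. Then the population version of the combined inverse-probability-weighted estimator identifies the average treatment effect: E[R·Z·Y / p] / E[R·Z / p] − E[R·(1 − Z)·Y / p] / E[R·(1 − Z) / p] = E[Y1 − Y0]; moreover E[R·Z/p] = r and E[R·(1−Z)/p] = 1 − r. -/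
open MeasureTheory ProbabilityTheory

/-- The population version of the combined inverse-probability-weighted
estimator identifies the average treatment effect when the treatment `Z` is
randomized (independent of the potential outcomes, `r = E[Z] ∈ (0,1)`,
`Z` measurable with respect to the conditioning σ-algebra `m`) and the outcome
is missing at random given `m` with observation propensity `p = μ[R | m]`
bounded away from zero; moreover `E[R·Z/p] = r` and `E[R·(1−Z)/p] = 1 − r`. -/
theorem full_weighting_identifies_ate
    {Ω : Type*} (m : MeasurableSpace Ω) {mF : MeasurableSpace Ω} (μ : Measure Ω) [IsProbabilityMeasure μ]
    (hm : m ≤ mF)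
    (Y0 Y1 Z R p : Ω → ℝ)
    (hY0meas : Measurable Y0) (hY1meas : Measurable Y1)
    (hY0b : ∃ C, ∀ ω, |Y0 ω| ≤ C) (hY1b : ∃ C, ∀ ω, |Y1 ω| ≤ C)
    (hZ01 : ∀ ω, Z ω = 0 ∨ Z ω = 1) (hZmeas : Measurable[m] Z)
    (hindep : IndepFun (fun ω => (Y0 ω, Y1 ω)) Z μ)
    (r : ℝ) (hr : r = ∫ ω, Z ω ∂μ) (hr0 : 0 < r) (hr1 : r < 1)
    (Y : Ω → ℝ) (hY : Y = fun ω => Z ω * Y1 ω + (1 - Z ω) * Y0 ω)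
    (hR01 : ∀ ω, R ω = 0 ∨ R ω = 1) (hRmeas : Measurable R)
    (hpmeas : StronglyMeasurable[m] p)
    (hp : p =ᵐ[μ] μ[R | m])
    (ε : ℝ) (hε : 0 < ε) (hpε : ∀ᵐ ω ∂μ, ε ≤ p ω)
    (hMAR : μ[fun ω => R ω * Y ω | m] =ᵐ[μ] fun ω => (μ[R | m]) ω * (μ[Y | m]) ω) :
    ((∫ ω, R ω * Z ω * Y ω / p ω ∂μ) / (∫ ω, R ω * Z ω / p ω ∂μ) -
        (∫ ω, R ω * (1 - Z ω) * Y ω / p ω ∂μ) / (∫ ω, R ω * (1 - Z ω) / p ω ∂μ) =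
      ∫ ω, (Y1 ω - Y0 ω) ∂μ) ∧
    (∫ ω, R ω * Z ω / p ω ∂μ = r) ∧
    (∫ ω, R ω * (1 - Z ω) / p ω ∂μ = 1 - r) := by
  haveI : SigmaFinite (μ.trim hm) := inferInstance
  -- boundedness facts
  obtain ⟨C0, hC0⟩ := hY0b
  obtain ⟨C1, hC1⟩ := hY1b
  have hZb : ∀ ω, |Z ω| ≤ 1 := by
    intro ω; rcases hZ01 ω with h | h <;> simp [h]
  have hRb : ∀ ω, |R ω| ≤ 1 := by
    intro ω; rcases hR01 ω with h | h <;> simp [h]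
  have hYb : ∀ ω, |Y ω| ≤ |C1| + |C0| := by
    intro ω
    rcases hZ01 ω with h | h
    · have : Y ω = Y0 ω := by simp [hY, h]
      rw [this]
      have := abs_nonneg C1; have := le_abs_self C0
      have := hC0 ω
      linarith
    · have : Y ω = Y1 ω := by simp [hY, h]
      rw [this]
      have := abs_nonneg C0; have := le_abs_self C1
      have := hC1 ω
      linarith
  have hZF : Measurable[mF] Z := (hZmeas.mono hm le_rfl)
  have hY0F : Measurable[mF] Y0 := hY0meas
  have hY1F : Measurable[mF] Y1 := hY1meas
  have hRF : Measurable[mF] R := hRmeas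
  have hpF : Measurable[mF] p := hpmeas.measurable.mono hm le_rfl
  have hYmeas : Measurable[mF] Y := by
    rw [hY]
    exact (hZF.mul hY1F).add ((measurable_const.sub hZF).mul hY0F)
  -- integrability of bounded a.e.-strongly-measurable functions
  have intOfBdd : ∀ (f : Ω → ℝ) (C : ℝ), Measurable[mF] f →
      (∀ᵐ ω ∂μ, |f ω| ≤ C) → Integrable f μ := by
    intro f C hfm hb
    exact (integrable_const C).mono' hfm.aestronglyMeasurable
      (by simpa [Real.norm_eq_abs] using hb)
  -- the key identity
  have KEY : ∀ (g h : Ω → ℝ), Measurable[m] g → (∃ Cg, ∀ ω, |g ω| ≤ Cg) →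
      Measurable[mF] h → (∃ Ch, ∀ ω, |h ω| ≤ Ch) →
      (μ[fun ω => R ω * h ω | m] =ᵐ[μ] fun ω => p ω * (μ[h | m]) ω) →
      ∫ ω, R ω * g ω * h ω / p ω ∂μ = ∫ ω, g ω * h ω ∂μ := by
    intro g h hg hgb hh hhb hcond
    obtain ⟨Cg, hCg⟩ := hgb
    obtain ⟨Ch, hCh⟩ := hhb
    have hgmF : Measurable[mF] g := hg.mono hm le_rfl
    set g' : Ω → ℝ := fun ω => g ω / p ω with hg'def
    have hg'm : StronglyMeasurable[m] g' :=
      (hg.div hpmeas.measurable).stronglyMeasurable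
    have hg'F : Measurable[mF] g' := hgmF.div hpF
    have hg'b : ∀ᵐ ω ∂μ, |g' ω| ≤ Cg / ε := by
      filter_upwards [hpε] with ω hpω
      have hp0 : 0 < p ω := lt_of_lt_of_le hε hpω
      rw [hg'def, abs_div, abs_of_pos hp0, div_le_div_iff₀ hp0 hε]
      calc |g ω| * ε ≤ Cg * ε := mul_le_mul_of_nonneg_right (hCg ω) hε.le
        _ ≤ Cg * p ω :=
            mul_le_mul_of_nonneg_left hpω (le_trans (abs_nonneg _) (hCg ω))
    have hRh_int : Integrable (fun ω => R ω * h ω) μ := by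
      refine intOfBdd _ Ch (hRF.mul hh) (Filter.Eventually.of_forall fun ω => ?_)
      rw [abs_mul]
      calc |R ω| * |h ω| ≤ 1 * Ch :=
            mul_le_mul (hRb ω) (hCh ω) (abs_nonneg _) zero_le_one
        _ = Ch := one_mul Ch
    have hg'Rh_int : Integrable (g' * fun ω => R ω * h ω) μ := by
      refine intOfBdd _ ((Cg / ε) * Ch) (hg'F.mul (hRF.mul hh)) ?_
      filter_upwards [hg'b] with ω hb
      simp only [Pi.mul_apply]
      rw [abs_mul, abs_mul]
      have h1 : |R ω| * |h ω| ≤ Ch := by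
        calc |R ω| * |h ω| ≤ 1 * Ch :=
              mul_le_mul (hRb ω) (hCh ω) (abs_nonneg _) zero_le_one
          _ = Ch := one_mul Ch
      have h2 : 0 ≤ Cg / ε := le_trans (abs_nonneg _) hb
      exact mul_le_mul hb h1 (by positivity) h2
    have hpull : μ[g' * fun ω => R ω * h ω | m] =ᵐ[μ] g' * μ[fun ω => R ω * h ω | m] :=
      condExp_mul_of_stronglyMeasurable_left hg'm hg'Rh_int hRh_int
    have hh_int : Integrable h μ :=
      intOfBdd _ Ch hh (Filter.Eventually.of_forall hCh)
    have hgh_int : Integrable (g * h) μ := by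
      refine intOfBdd _ (Cg * Ch) (hgmF.mul hh) (Filter.Eventually.of_forall fun ω => ?_)
      simp only [Pi.mul_apply]
      rw [abs_mul]
      exact mul_le_mul (hCg ω) (hCh ω) (abs_nonneg _) (le_trans (abs_nonneg _) (hCg ω))
    have hpull2 : μ[g * h | m] =ᵐ[μ] g * μ[h | m] :=
      condExp_mul_of_stronglyMeasurable_left hg.stronglyMeasurable hgh_int hh_int
    have step1 : ∫ ω, R ω * g ω * h ω / p ω ∂μ = ∫ ω, (g' * fun ω => R ω * h ω) ω ∂μ := by
      refine integral_congr_ae (Filter.Eventually.of_forall fun ω => ?_)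
      simp only [Pi.mul_apply, hg'def]
      rw [div_eq_mul_inv, div_eq_mul_inv]
      ring
    have step2 : ∫ ω, (g' * fun ω => R ω * h ω) ω ∂μ
        = ∫ ω, (μ[g' * fun ω => R ω * h ω | m]) ω ∂μ := (integral_condExp hm).symm
    have step3 : ∫ ω, (μ[g' * fun ω => R ω * h ω | m]) ω ∂μ
        = ∫ ω, g ω * (μ[h | m]) ω ∂μ := by
      refine integral_congr_ae ?_
      filter_upwards [hpull, hcond, hpε] with ω h1 h2 h3
      have hp0 : p ω ≠ 0 := (lt_of_lt_of_le hε h3).ne'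
      simp only [Pi.mul_apply] at h1
      rw [h1, h2, hg'def]
      field_simp
    have step4 : ∫ ω, g ω * (μ[h | m]) ω ∂μ = ∫ ω, (μ[g * h | m]) ω ∂μ := by
      refine integral_congr_ae ?_
      filter_upwards [hpull2] with ω h1
      simp only [Pi.mul_apply] at h1 ⊢
      rw [h1]
    have step5 : ∫ ω, (μ[g * h | m]) ω ∂μ = ∫ ω, g ω * h ω ∂μ := by
      rw [integral_condExp hm]; rfl
    rw [step1, step2, step3, step4, step5]
  -- conditional expectation facts
  have hcondY : μ[fun ω => R ω * Y ω | m] =ᵐ[μ] fun ω => p ω * (μ[Y | m]) ω := by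
    filter_upwards [hMAR, hp] with ω h1 h2
    rw [h1, h2]
  have hcond1 : μ[fun ω => R ω * (1 : ℝ) | m] =ᵐ[μ] fun ω => p ω * (μ[(fun _ => (1:ℝ)) | m]) ω := by
    have hc : μ[(fun _ : Ω => (1:ℝ)) | m] = fun _ => (1:ℝ) := condExp_const hm 1
    have hR' : μ[fun ω => R ω * (1:ℝ) | m] =ᵐ[μ] μ[R | m] := by
      refine condExp_congr_ae (Filter.Eventually.of_forall fun ω => ?_)
      simp
    filter_upwards [hR', hp] with ω h1 h3
    rw [h1, hc]
    simp [← h3]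
  -- apply KEY: four integrals
  have h1Zmeas : Measurable[m] (fun ω => 1 - Z ω) := measurable_const.sub hZmeas
  have h1Zb : ∃ Cg, ∀ ω, |1 - Z ω| ≤ Cg := by
    refine ⟨1, fun ω => ?_⟩
    rcases hZ01 ω with h | h <;> simp [h]
  have hZb' : ∃ Cg, ∀ ω, |Z ω| ≤ Cg := ⟨1, hZb⟩
  have hYb' : ∃ Ch, ∀ ω, |Y ω| ≤ Ch := ⟨|C1| + |C0|, hYb⟩
  have h1b : ∃ Ch, ∀ ω : Ω, |(1:ℝ)| ≤ Ch := ⟨1, fun ω => by simp⟩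
  have I1 : ∫ ω, R ω * Z ω * Y ω / p ω ∂μ = ∫ ω, Z ω * Y ω ∂μ :=
    KEY Z Y hZmeas hZb' hYmeas hYb' hcondY
  have I2 : ∫ ω, R ω * Z ω * (1:ℝ) / p ω ∂μ = ∫ ω, Z ω * (1:ℝ) ∂μ :=
    KEY Z (fun _ => 1) hZmeas hZb' measurable_const h1b hcond1
  have I3 : ∫ ω, R ω * (1 - Z ω) * Y ω / p ω ∂μ = ∫ ω, (1 - Z ω) * Y ω ∂μ :=
    KEY (fun ω => 1 - Z ω) Y h1Zmeas h1Zb hYmeas hYb' hcondY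
  have I4 : ∫ ω, R ω * (1 - Z ω) * (1:ℝ) / p ω ∂μ = ∫ ω, (1 - Z ω) * (1:ℝ) ∂μ :=
    KEY (fun ω => 1 - Z ω) (fun _ => 1) h1Zmeas h1Zb measurable_const h1b hcond1
  simp only [mul_one] at I2 I4
  -- independence consequences
  have hindepY1 : IndepFun Z Y1 μ :=
    (hindep.comp measurable_snd measurable_id).symm
  have hindepY0 : IndepFun (fun ω => 1 - Z ω) Y0 μ := by
    have h := (hindep.comp measurable_fst measurable_id).symm
    exact h.comp (measurable_const.sub measurable_id) measurable_id
  have hZint : Integrable Z μ :=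
    intOfBdd _ 1 hZF (Filter.Eventually.of_forall hZb)
  have h1Zint : Integrable (fun ω => 1 - Z ω) μ := (integrable_const 1).sub hZint
  have hY1int : Integrable Y1 μ :=
    intOfBdd _ C1 hY1F (Filter.Eventually.of_forall hC1)
  have hY0int : Integrable Y0 μ :=
    intOfBdd _ C0 hY0F (Filter.Eventually.of_forall hC0)
  -- compute the numerators
  have hZY : ∫ ω, Z ω * Y ω ∂μ = r * ∫ ω, Y1 ω ∂μ := by
    have heq : ∀ ω, Z ω * Y ω = Z ω * Y1 ω := by
      intro ω; rcases hZ01 ω with h | h <;> simp [hY, h]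
    have hmul : ∫ ω, Z ω * Y1 ω ∂μ = (∫ ω, Z ω ∂μ) * ∫ ω, Y1 ω ∂μ :=
      hindepY1.integral_fun_mul_eq_mul_integral hZint.aestronglyMeasurable hY1int.aestronglyMeasurable
    rw [integral_congr_ae (Filter.Eventually.of_forall heq), hmul, ← hr]
  have h1Zr : ∫ ω, (1 - Z ω) ∂μ = 1 - r := by
    rw [integral_sub (integrable_const 1) hZint, integral_const, ← hr]
    simp
  have h1ZY : ∫ ω, (1 - Z ω) * Y ω ∂μ = (1 - r) * ∫ ω, Y0 ω ∂μ := by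
    have heq : ∀ ω, (1 - Z ω) * Y ω = (1 - Z ω) * Y0 ω := by
      intro ω; rcases hZ01 ω with h | h <;> simp [hY, h]
    have hmul : ∫ ω, (1 - Z ω) * Y0 ω ∂μ = (∫ ω, (1 - Z ω) ∂μ) * ∫ ω, Y0 ω ∂μ :=
      hindepY0.integral_fun_mul_eq_mul_integral h1Zint.aestronglyMeasurable hY0int.aestronglyMeasurable
    rw [integral_congr_ae (Filter.Eventually.of_forall heq), hmul, h1Zr]
  refine ⟨?_, by rw [I2, hr], by rw [I4, h1Zr]⟩
  have h1r : (1:ℝ) - r ≠ 0 := by linarith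
  rw [I1, I2, I3, I4, hZY, h1ZY, ← hr, h1Zr, integral_sub hY1int hY0int]
  field_simp
end
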